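/- arXiv:2510.00752 — 2 statements merged into one kernel-verified Lean document; each statement's English description precedes it below -/
import Mathlib

section
/- Let α ∈ (0,1) be a constant, let ρ and σ be density matrices of the same size, each of rank at most r, let δ₁, ε₂ ∈ (0,1), and let p₂ be a real polynomial with |p₂(x)| ≤ 1 for all x ∈ [−1,1] and |p₂(x) − (1/2)x^{1−α}| ≤ ε₂ for all x ∈ [0,1]. Then |(δ₁^{1−α}/2)·tr(ρ^α·p₂(σ)) − (δ₁^{1−α}/4)·tr(ρ^α·σ^{1−α})| ≤ (δ₁^{1−α}/2^α)·r^{1−α}·ε₂. -/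
/-!
Write `p₂(σ) - ½ σ^{1-α} = g(σ)` for `g(x) = p₂(x) - ½ x^{1-α}`. The spectrum of `σ` lies in
`[0, 1]`, where `|g| ≤ ε₂`, so `ε₂ ± g(σ)` are positive semidefinite and pairing them with the
positive semidefinite `ρ^α` gives `|tr(ρ^α g(σ))| ≤ ε₂ tr ρ^α`. Jensen's inequality for the concave
`t ↦ t^α` over the at most `r` nonzero eigenvalues of `ρ` gives `tr ρ^α ≤ r^{1-α}`, and
`1/2 ≤ 1/2^α` absorbs the remaining constant.
-/

open Matrix Polynomial
open scoped ComplexOrder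

/-- The matrix power `A^β` of a Hermitian matrix, via the spectral decomposition:
apply `t ↦ t^β` to the eigenvalues, with the convention `0^β = 0`.
(Junk value `0` if `A` is not Hermitian.) -/
noncomputable def matPow {n : Type*} [Fintype n] [DecidableEq n]
    (A : Matrix n n ℂ) (β : ℝ) : Matrix n n ℂ :=
  if hA : A.IsHermitian then hA.cfc (fun x => if x = 0 then 0 else x ^ β) else 0

theorem Complex.norm_le_of_neg_le_of_le {z : ℂ} {a : ℝ} (h₁ : -(a : ℂ) ≤ z) (h₂ : z ≤ a) :
    ‖z‖ ≤ a := by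
  rw [Complex.le_def] at h₁ h₂
  have hz : z = z.re := Complex.ext rfl (by simpa using h₂.2)
  rw [hz, Complex.norm_real, Real.norm_eq_abs, abs_le]
  exact ⟨by simpa using h₁.1, h₂.1⟩

theorem Real.sum_rpow_le_card_rpow_mul_rpow_sum {ι : Type*} (s : Finset ι) {x : ι → ℝ}
    (hx : ∀ i ∈ s, 0 ≤ x i) {β : ℝ} (hβ₀ : 0 ≤ β) (hβ₁ : β ≤ 1) :
    ∑ i ∈ s, x i ^ β ≤ (s.card : ℝ) ^ (1 - β) * (∑ i ∈ s, x i) ^ β := by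
  rcases s.eq_empty_or_nonempty with rfl | hs
  · simpa using mul_nonneg (Real.rpow_nonneg le_rfl _) (Real.rpow_nonneg le_rfl _)
  have hc : (0 : ℝ) < s.card := by exact_mod_cast hs.card_pos
  have jensen := (Real.concaveOn_rpow hβ₀ hβ₁).le_map_sum (t := s) (w := fun _ => (s.card : ℝ)⁻¹)
    (p := x) (fun _ _ => by positivity) (by simp [hc.ne']) hx
  simp only [smul_eq_mul, ← Finset.mul_sum] at jensen
  rw [Real.mul_rpow (by positivity) (Finset.sum_nonneg hx), Real.inv_rpow hc.le] at jensen
  calc ∑ i ∈ s, x i ^ β = s.card * ((s.card : ℝ)⁻¹ * ∑ i ∈ s, x i ^ β) := by field_simp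
    _ ≤ s.card * ((s.card : ℝ) ^ β)⁻¹ * (∑ i ∈ s, x i) ^ β := by
      rw [mul_assoc]; gcongr
    _ = (s.card : ℝ) ^ (1 - β) * (∑ i ∈ s, x i) ^ β := by
      rw [Real.rpow_sub hc, Real.rpow_one, div_eq_mul_inv]

namespace Matrix

variable {n : Type*} [Fintype n] [DecidableEq n]

open scoped MatrixOrder

theorem IsHermitian.trace_cfc {A : Matrix n n ℂ} (hA : A.IsHermitian) (f : ℝ → ℝ) :
    (cfc f A).trace = ((∑ i, f (hA.eigenvalues i) : ℝ) : ℂ) := by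
  rw [hA.cfc_eq, IsHermitian.cfc, Unitary.conjStarAlgAut_apply, trace_mul_cycle,
    Unitary.coe_star_mul_self, one_mul, trace_diagonal]
  simp

theorem PosSemidef.trace_mul_nonneg {A B : Matrix n n ℂ} (hA : A.PosSemidef) (hB : B.PosSemidef) :
    0 ≤ (A * B).trace := by
  obtain ⟨X, rfl⟩ := CStarAlgebra.nonneg_iff_eq_star_mul_self.mp hA.nonneg
  rw [mul_assoc, trace_mul_comm]
  exact (hB.mul_mul_conjTranspose_same X).trace_nonneg

theorem PosSemidef.norm_trace_mul_cfc_le {X A : Matrix n n ℂ} (hX : X.PosSemidef)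
    (hA : A.IsHermitian) {f : ℝ → ℝ} {ε : ℝ} (hf : ∀ x ∈ spectrum ℝ A, |f x| ≤ ε) :
    ‖(X * cfc f A).trace‖ ≤ ε * ‖X.trace‖ := by
  have hcont : ContinuousOn f (spectrum ℝ A) := A.finite_real_spectrum.continuousOn _
  have hconst : ContinuousOn (fun _ : ℝ => ε) (spectrum ℝ A) := continuousOn_const
  have htrace (Y : Matrix n n ℂ) :
      (X * (algebraMap ℝ _ ε + Y)).trace = ((ε * ‖X.trace‖ : ℝ) : ℂ) + (X * Y).trace := by
    rw [Algebra.algebraMap_eq_smul_one, mul_add, trace_add, mul_smul_comm, mul_one, trace_smul,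
      Complex.real_smul, Complex.ofReal_mul, ← Complex.eq_coe_norm_of_nonneg hX.trace_nonneg]
  have hupper : 0 ≤ cfc (fun x => ε - f x) A :=
    cfc_nonneg fun x hx => sub_nonneg.2 (abs_le.1 (hf x hx)).2
  have hlower : 0 ≤ cfc (fun x => ε + f x) A :=
    cfc_nonneg fun x hx => neg_le_iff_add_nonneg'.1 (abs_le.1 (hf x hx)).1
  rw [cfc_sub _ _ _ hconst hcont, cfc_const ε A, sub_eq_add_neg] at hupper
  rw [cfc_add _ _ _ hconst hcont, cfc_const ε A] at hlower
  have h₁ := hX.trace_mul_nonneg (nonneg_iff_posSemidef.1 hupper)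
  have h₂ := hX.trace_mul_nonneg (nonneg_iff_posSemidef.1 hlower)
  rw [htrace, mul_neg, trace_neg] at h₁
  rw [htrace] at h₂
  refine Complex.norm_le_of_neg_le_of_le ?_ ?_
  · linear_combination h₂
  · linear_combination h₁

theorem PosSemidef.spectrum_subset_Icc_trace {A : Matrix n n ℂ} (hA : A.PosSemidef) :
    spectrum ℝ A ⊆ Set.Icc 0 A.trace.re := by
  rintro x hx
  obtain ⟨i, rfl⟩ := hA.1.spectrum_real_eq_range_eigenvalues ▸ hx
  rw [hA.1.trace_eq_sum_eigenvalues]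
  refine ⟨hA.eigenvalues_nonneg i, ?_⟩
  simpa using Finset.single_le_sum (fun j _ => hA.eigenvalues_nonneg j) (Finset.mem_univ i)

end Matrix

section

variable {n : Type*} [Fintype n] [DecidableEq n]

theorem matPow_eq_cfc {A : Matrix n n ℂ} (hA : A.IsHermitian) (β : ℝ) :
    matPow A β = cfc (fun x : ℝ => if x = 0 then 0 else x ^ β) A := by
  rw [matPow, dif_pos hA, hA.cfc_eq]

theorem matPow_eq_cfc_rpow {A : Matrix n n ℂ} (hA : A.IsHermitian) {β : ℝ} (hβ : β ≠ 0) :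
    matPow A β = cfc (fun x : ℝ => x ^ β) A := by
  rw [matPow_eq_cfc hA]
  congr! 2 with x
  split_ifs with hx <;> simp [hx, Real.zero_rpow hβ]

open scoped MatrixOrder in
theorem posSemidef_matPow {A : Matrix n n ℂ} (hA : A.PosSemidef) (β : ℝ) :
    (matPow A β).PosSemidef := by
  rw [matPow_eq_cfc hA.1, ← nonneg_iff_posSemidef]
  refine cfc_nonneg fun x hx => ?_
  split_ifs
  · exact le_rfl
  · exact Real.rpow_nonneg (spectrum_nonneg_of_nonneg (nonneg_iff_posSemidef.2 hA) hx) β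

theorem Matrix.PosSemidef.norm_trace_matPow_le {A : Matrix n n ℂ} (hA : A.PosSemidef) {β : ℝ}
    (hβ₀ : 0 ≤ β) (hβ₁ : β ≤ 1) :
    ‖(matPow A β).trace‖ ≤ (A.rank : ℝ) ^ (1 - β) * ‖A.trace‖ ^ β := by
  set s := Finset.univ.filter fun i => hA.1.eigenvalues i ≠ 0
  have hsum_pow : (matPow A β).trace = ((∑ i ∈ s, hA.1.eigenvalues i ^ β : ℝ) : ℂ) := by
    rw [matPow_eq_cfc hA.1, hA.1.trace_cfc, Finset.sum_filter]
    simp_rw [ite_not]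
  have hsum : A.trace = ((∑ i ∈ s, hA.1.eigenvalues i : ℝ) : ℂ) := by
    rw [hA.1.trace_eq_sum_eigenvalues, Finset.sum_filter_ne_zero]
    push_cast; rfl
  have hrank : A.rank = s.card := by
    rw [hA.1.rank_eq_card_non_zero_eigs, Fintype.card_subtype]
  have hnonneg : ∀ i ∈ s, 0 ≤ hA.1.eigenvalues i := fun i _ => hA.eigenvalues_nonneg i
  rw [hsum_pow, hsum, hrank, Complex.norm_real, Complex.norm_real, Real.norm_of_nonneg
    (Finset.sum_nonneg fun i hi => Real.rpow_nonneg (hnonneg i hi) β),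
    Real.norm_of_nonneg (Finset.sum_nonneg hnonneg)]
  exact Real.sum_rpow_le_card_rpow_mul_rpow_sum s hnonneg hβ₀ hβ₁

theorem aeval_sub_smul_matPow {A : Matrix n n ℂ} (hA : A.IsHermitian) (p : ℝ[X]) (c : ℝ)
    {β : ℝ} (hβ : β ≠ 0) :
    aeval A p - c • matPow A β = cfc (fun x => p.eval x - c * x ^ β) A := by
  have hcont (f : ℝ → ℝ) : ContinuousOn f (spectrum ℝ A) := A.finite_real_spectrum.continuousOn _
  rw [matPow_eq_cfc_rpow hA hβ, cfc_sub _ _ _ (hcont _) (hcont _), cfc_const_mul _ _ _ (hcont _),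
    cfc_polynomial p A hA.isSelfAdjoint]

theorem Matrix.PosSemidef.norm_trace_matPow_le_of_rank_le {A : Matrix n n ℂ} (hA : A.PosSemidef)
    (htr : A.trace = 1) {r : ℕ} (hr : A.rank ≤ r) {β : ℝ} (hβ₀ : 0 ≤ β) (hβ₁ : β ≤ 1) :
    ‖(matPow A β).trace‖ ≤ (r : ℝ) ^ (1 - β) := by
  have h := hA.norm_trace_matPow_le hβ₀ hβ₁
  rw [htr, norm_one, Real.one_rpow, mul_one] at h
  exact h.trans (Real.rpow_le_rpow (Nat.cast_nonneg _) (mod_cast hr) (by linarith))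

end

theorem abs_trace_pow_poly_sub_trace_pow_pow_le_general
    {n : Type*} [Fintype n] [DecidableEq n] (r : ℕ)
    (α δ₁ ε₂ : ℝ) (hα : α ∈ Set.Ioo (0 : ℝ) 1)
    (hδ₁ : δ₁ ∈ Set.Ioo (0 : ℝ) 1) (hε₂ : ε₂ ∈ Set.Ioo (0 : ℝ) 1)
    (ρ σ : Matrix n n ℂ)
    (hρ : ρ.PosSemidef) (hρ1 : ρ.trace = 1) (hρr : ρ.rank ≤ r)
    (hσ : σ.PosSemidef) (hσ1 : σ.trace = 1)
    (p₂ : Polynomial ℝ)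
    (hp₂approx : ∀ x ∈ Set.Icc (0 : ℝ) 1, |p₂.eval x - (1 / 2) * x ^ (1 - α)| ≤ ε₂) :
    ‖(((δ₁ ^ (1 - α) / 2 : ℝ) : ℂ) * (matPow ρ α * Polynomial.aeval σ p₂).trace
        - ((δ₁ ^ (1 - α) / 4 : ℝ) : ℂ) * (matPow ρ α * matPow σ (1 - α)).trace)‖
      ≤ δ₁ ^ (1 - α) / 2 ^ α * (r : ℝ) ^ (1 - α) * ε₂ := by
  obtain ⟨hα₀, hα₁⟩ := hα
  set g : ℝ → ℝ := fun x => p₂.eval x - 1 / 2 * x ^ (1 - α)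
  have hg : ∀ x ∈ spectrum ℝ σ, |g x| ≤ ε₂ := fun x hx =>
    hp₂approx x (by simpa [hσ1] using hσ.spectrum_subset_Icc_trace hx)
  have hexpr : ((δ₁ ^ (1 - α) / 2 : ℝ) : ℂ) * (matPow ρ α * Polynomial.aeval σ p₂).trace
        - ((δ₁ ^ (1 - α) / 4 : ℝ) : ℂ) * (matPow ρ α * matPow σ (1 - α)).trace
      = ((δ₁ ^ (1 - α) / 2 : ℝ) : ℂ) * (matPow ρ α * cfc g σ).trace := by
    rw [← aeval_sub_smul_matPow hσ.1 p₂ (1 / 2) (by linarith), mul_sub, trace_sub,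
      mul_smul_comm, trace_smul, Complex.real_smul]
    push_cast
    ring
  have hδ : 0 ≤ δ₁ ^ (1 - α) := Real.rpow_nonneg hδ₁.1.le _
  have hε : 0 ≤ ε₂ := hε₂.1.le
  calc _ = δ₁ ^ (1 - α) / 2 * ‖(matPow ρ α * cfc g σ).trace‖ := by
        rw [hexpr, norm_mul, Complex.norm_real, Real.norm_of_nonneg (by positivity)]
    _ ≤ δ₁ ^ (1 - α) / 2 * (ε₂ * (r : ℝ) ^ (1 - α)) := by
        gcongr
        exact ((posSemidef_matPow hρ α).norm_trace_mul_cfc_le hσ.1 hg).trans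
          (by gcongr; exact hρ.norm_trace_matPow_le_of_rank_le hρ1 hρr hα₀.le hα₁.le)
    _ ≤ δ₁ ^ (1 - α) / 2 ^ α * (r : ℝ) ^ (1 - α) * ε₂ := by
        rw [mul_comm ε₂, ← mul_assoc]
        gcongr
        simpa using Real.rpow_le_rpow_of_exponent_le one_le_two hα₁.le

/-- `|(δ₁^{1-α}/2) tr(ρ^α p₂(σ)) - (δ₁^{1-α}/4) tr(ρ^α σ^{1-α})| ≤ (δ₁^{1-α}/2^α) r^{1-α} ε₂`. -/
theorem abs_trace_pow_poly_sub_trace_pow_pow_le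
    {n : Type*} [Fintype n] [DecidableEq n] (r : ℕ)
    (α δ₁ ε₂ : ℝ) (hα : α ∈ Set.Ioo (0 : ℝ) 1)
    (hδ₁ : δ₁ ∈ Set.Ioo (0 : ℝ) 1) (hε₂ : ε₂ ∈ Set.Ioo (0 : ℝ) 1)
    (ρ σ : Matrix n n ℂ)
    (hρ : ρ.PosSemidef) (hρ1 : ρ.trace = 1) (hρr : ρ.rank ≤ r)
    (hσ : σ.PosSemidef) (hσ1 : σ.trace = 1) (hσr : σ.rank ≤ r)
    (p₂ : Polynomial ℝ)
    (hp₂bdd : ∀ x ∈ Set.Icc (-1 : ℝ) 1, |p₂.eval x| ≤ 1)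
    (hp₂approx : ∀ x ∈ Set.Icc (0 : ℝ) 1, |p₂.eval x - (1 / 2) * x ^ (1 - α)| ≤ ε₂) :
    ‖(((δ₁ ^ (1 - α) / 2 : ℝ) : ℂ) * (matPow ρ α * Polynomial.aeval σ p₂).trace
        - ((δ₁ ^ (1 - α) / 4 : ℝ) : ℂ) * (matPow ρ α * matPow σ (1 - α)).trace)‖
      ≤ δ₁ ^ (1 - α) / 2 ^ α * (r : ℝ) ^ (1 - α) * ε₂ :=
  abs_trace_pow_poly_sub_trace_pow_pow_le_general r α δ₁ ε₂ hα hδ₁ hε₂ ρ σ hρ hρ1 hρr hσ hσ1 p₂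
    hp₂approx
end

section
/- Let α ∈ (0,1) be a constant, let r be a positive integer, let ρ and σ be r×r density matrices, let ε₁, δ₁, ε₂ ∈ (0,1), let p₁ be a real polynomial with |p₁(x)| ≤ 1 for all x ∈ [−1,1] and |p₁(x) − (δ₁^{1−α}/2)·x^{α−1}| ≤ ε₁ for all x ∈ [δ₁,1], and let p₂ be a real polynomial with |p₂(x)| ≤ 1 for all x ∈ [−1,1] and |p₂(x) − (1/2)x^{1−α}| ≤ ε₂ for all x ∈ [0,1]. Then |tr(ρ·p₁(ρ/2)·p₂(σ/2)) − δ₁^{1−α}·tr((ρ/2)^α·p₂(σ/2))| ≤ (r·ε₂ + 2^{α−2}·r^α)·(4δ₁ + ε₁). -/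
open Matrix Polynomial
open scoped ComplexOrder

/-!
Put `A = ρ/2` and `B = σ/2`: they are positive semidefinite of trace `1/2`, so their eigenvalues
`λᵢ, μⱼ` lie in `[0, 1/2]`. By the functional calculus, `ρ p₁(A) - δ₁^{1-α} A^α = f(A)` with
`f x = 2x p₁(x) - δ₁^{1-α} x^α`, and `|f| ≤ 4δ₁ + ε₁` on `[0, 1/2]`: on `[δ₁, 1/2]` it is `2x` times
the approximation error of `p₁`, below `δ₁` the two terms are bounded by `2δ₁` and `δ₁`.
For Hermitian `A, B` with eigenbases `uᵢ, vⱼ`,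
`tr (f(A) g(B)) = ∑ᵢⱼ f(λᵢ) g(μⱼ) |⟪uᵢ, vⱼ⟫|²`, and the weights `|⟪uᵢ, vⱼ⟫|²` sum to `1` over `i`,
so `|tr (f(A) g(B))| ≤ maxᵢ |f(λᵢ)| · ∑ⱼ |g(μⱼ)|`. Finally
`∑ⱼ |p₂(μⱼ)| ≤ r ε₂ + ½ ∑ⱼ μⱼ^{1-α}`, and by concavity of `t ↦ t^{1-α}` (Jensen),
`∑ⱼ μⱼ^{1-α} ≤ r^α (1/2)^{1-α}`.
-/

lemma abs_two_mul_mul_sub_rpow_le {φ : ℝ → ℝ} {α δ ε x : ℝ} (hα : 0 ≤ α) (hδ : 0 < δ)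
    (hε : 0 ≤ ε) (hφbdd : ∀ y ∈ Set.Icc (-1 : ℝ) 1, |φ y| ≤ 1)
    (hφapprox : ∀ y ∈ Set.Icc δ 1, |φ y - δ ^ (1 - α) / 2 * y ^ (α - 1)| ≤ ε)
    (hx0 : 0 ≤ x) (hx : x ≤ 1 / 2) :
    |2 * x * φ x - δ ^ (1 - α) * (if x = 0 then 0 else x ^ α)| ≤ 4 * δ + ε := by
  rcases le_or_gt δ x with hδx | hxδ
  · have hxpos : 0 < x := hδ.trans_le hδx
    have hfactor : 2 * x * φ x - δ ^ (1 - α) * (if x = 0 then 0 else x ^ α)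
        = 2 * x * (φ x - δ ^ (1 - α) / 2 * x ^ (α - 1)) := by
      rw [if_neg hxpos.ne', Real.rpow_sub_one hxpos.ne']
      field_simp
    rw [hfactor, abs_mul, abs_of_nonneg (by positivity)]
    nlinarith [hφapprox x ⟨hδx, by linarith⟩, abs_nonneg (φ x - δ ^ (1 - α) / 2 * x ^ (α - 1))]
  · have hφ : |2 * x * φ x| ≤ 2 * δ := by
      rw [abs_mul, abs_of_nonneg (by positivity)]
      nlinarith [hφbdd x ⟨by linarith, by linarith⟩, abs_nonneg (φ x)]
    have hpow : |δ ^ (1 - α) * (if x = 0 then 0 else x ^ α)| ≤ δ := by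
      split_ifs
      · simpa using hδ.le
      · calc |δ ^ (1 - α) * x ^ α| = δ ^ (1 - α) * x ^ α := abs_of_nonneg (by positivity)
          _ ≤ δ ^ (1 - α) * δ ^ α := by gcongr
          _ = δ := by rw [← Real.rpow_add hδ, sub_add_cancel, Real.rpow_one]
    linarith [abs_sub _ _ |>.trans (add_le_add hφ hpow)]

lemma sum_rpow_le_card_rpow_mul_rpow_sum {ι : Type*} [Fintype ι] {q : ℝ} (hq0 : 0 ≤ q)
    (hq1 : q ≤ 1) {μ : ι → ℝ} (hμ : ∀ j, 0 ≤ μ j) :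
    ∑ j, μ j ^ q ≤ (Fintype.card ι : ℝ) ^ (1 - q) * (∑ j, μ j) ^ q := by
  rcases isEmpty_or_nonempty ι with hι | hι
  · simp only [Finset.univ_eq_empty, Finset.sum_empty]
    positivity
  have hcard : (0 : ℝ) < Fintype.card ι := by exact_mod_cast Fintype.card_pos
  have hjensen := (Real.concaveOn_rpow hq0 hq1).le_map_sum (t := Finset.univ)
    (w := fun _ => (Fintype.card ι : ℝ)⁻¹) (p := μ) (fun _ _ => by positivity)
    (by simp [hcard.ne']) (fun j _ => hμ j)
  simp only [smul_eq_mul, ← Finset.mul_sum] at hjensen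
  rw [Real.mul_rpow (by positivity) (Finset.sum_nonneg fun j _ => hμ j),
    Real.inv_rpow hcard.le] at hjensen
  calc ∑ j, μ j ^ q = Fintype.card ι * ((Fintype.card ι : ℝ)⁻¹ * ∑ j, μ j ^ q) := by
        field_simp
    _ ≤ Fintype.card ι * (((Fintype.card ι : ℝ) ^ q)⁻¹ * (∑ j, μ j) ^ q) := by gcongr
    _ = (Fintype.card ι : ℝ) ^ (1 - q) * (∑ j, μ j) ^ q := by
        rw [Real.rpow_sub hcard, Real.rpow_one]
        ring

lemma sum_abs_le_of_abs_sub_half_rpow_le {ι : Type*} [Fintype ι] {g : ℝ → ℝ} {α ε : ℝ}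
    (hα : α ∈ Set.Ioo (0 : ℝ) 1)
    (hg : ∀ x ∈ Set.Icc (0 : ℝ) 1, |g x - 1 / 2 * x ^ (1 - α)| ≤ ε)
    {μ : ι → ℝ} (hμ : ∀ j, 0 ≤ μ j) (hμsum : ∑ j, μ j = 1 / 2) :
    ∑ j, |g (μ j)| ≤ Fintype.card ι * ε + 2 ^ (α - 2) * (Fintype.card ι : ℝ) ^ α := by
  have hμle : ∀ j, μ j ≤ 1 := fun j => by
    linarith [hμsum ▸ Finset.single_le_sum (fun i _ => hμ i) (Finset.mem_univ j)]
  have hpointwise : ∀ j, |g (μ j)| ≤ ε + 1 / 2 * μ j ^ (1 - α) := fun j => by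
    have hhalf : |1 / 2 * μ j ^ (1 - α)| = 1 / 2 * μ j ^ (1 - α) :=
      abs_of_nonneg (mul_nonneg (by norm_num) (Real.rpow_nonneg (hμ j) _))
    linarith [abs_sub_abs_le_abs_sub (g (μ j)) (1 / 2 * μ j ^ (1 - α)), hg (μ j) ⟨hμ j, hμle j⟩]
  have hpow := sum_rpow_le_card_rpow_mul_rpow_sum (q := 1 - α) (by linarith [hα.2])
    (by linarith [hα.1]) hμ
  rw [hμsum, sub_sub_cancel] at hpow
  calc ∑ j, |g (μ j)| ≤ ∑ j, (ε + 1 / 2 * μ j ^ (1 - α)) :=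
        Finset.sum_le_sum fun j _ => hpointwise j
    _ = Fintype.card ι * ε + 1 / 2 * ∑ j, μ j ^ (1 - α) := by
        rw [Finset.sum_add_distrib, Finset.sum_const, Finset.card_univ, nsmul_eq_mul,
          Finset.mul_sum]
    _ ≤ Fintype.card ι * ε + 1 / 2 * ((Fintype.card ι : ℝ) ^ α * (1 / 2) ^ (1 - α)) := by gcongr
    _ = Fintype.card ι * ε + 2 ^ (α - 2) * (Fintype.card ι : ℝ) ^ α := by
        rw [one_div 2, Real.inv_rpow zero_le_two, ← Real.rpow_neg zero_le_two, neg_sub]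
        simp only [Real.rpow_sub two_pos, Real.rpow_one, Real.rpow_two]
        ring

namespace Matrix

lemma trace_mul_diagonal {n R : Type*} [Fintype n] [DecidableEq n] [NonUnitalNonAssocSemiring R]
    (M : Matrix n n R) (e : n → R) :
    (M * diagonal e).trace = ∑ j, M j j * e j := by
  simp only [trace, diag_apply, mul_diagonal]

lemma trace_real_smul_of_trace_eq_one {n 𝕜 : Type*} [Fintype n] [RCLike 𝕜] {A : Matrix n n 𝕜}
    (h : A.trace = 1) (c : ℝ) : (c • A).trace = c := by
  rw [trace_smul, h, RCLike.real_smul_eq_coe_mul, mul_one]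

variable {n 𝕜 : Type*} [Fintype n] [DecidableEq n] [RCLike 𝕜]

lemma sum_norm_sq_row_eq_one {W : Matrix n n 𝕜} (hW : W ∈ unitaryGroup n 𝕜) (j : n) :
    ∑ i, ‖W j i‖ ^ 2 = 1 := by
  have h := congr_fun₂ (mem_unitaryGroup_iff.mp hW) j j
  simp only [mul_apply, star_apply, one_apply_eq, ← starRingEnd_apply, RCLike.mul_conj] at h
  exact_mod_cast h

lemma conj_diagonal_apply_self (W : Matrix n n 𝕜) (d : n → ℝ) (j : n) :
    (W * diagonal (fun i => (d i : 𝕜)) * star W) j j = ((∑ i, d i * ‖W j i‖ ^ 2 : ℝ) : 𝕜) := by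
  rw [mul_apply]
  simp only [mul_diagonal, star_apply, ← starRingEnd_apply]
  push_cast
  refine Finset.sum_congr rfl fun i _ => ?_
  rw [← RCLike.mul_conj]
  ring

lemma norm_conj_diagonal_apply_self_le {W : Matrix n n 𝕜} (hW : W ∈ unitaryGroup n 𝕜)
    {d : n → ℝ} {C : ℝ} (hd : ∀ i, |d i| ≤ C) (j : n) :
    ‖(W * diagonal (fun i => (d i : 𝕜)) * star W) j j‖ ≤ C := by
  rw [conj_diagonal_apply_self, RCLike.norm_ofReal]
  calc |∑ i, d i * ‖W j i‖ ^ 2| ≤ ∑ i, |d i| * ‖W j i‖ ^ 2 := by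
        refine (Finset.abs_sum_le_sum_abs _ _).trans_eq (Finset.sum_congr rfl fun i _ => ?_)
        rw [abs_mul, abs_of_nonneg (sq_nonneg ‖W j i‖)]
    _ ≤ ∑ i, C * ‖W j i‖ ^ 2 := by gcongr with i; exact hd i
    _ = C := by rw [← Finset.mul_sum, sum_norm_sq_row_eq_one hW, mul_one]

lemma norm_trace_conj_diagonal_mul_conj_diagonal_le {U V : Matrix n n 𝕜}
    (hU : U ∈ unitaryGroup n 𝕜) (hV : V ∈ unitaryGroup n 𝕜) {d : n → ℝ} {C : ℝ}
    (hd : ∀ i, |d i| ≤ C) (e : n → ℝ) :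
    ‖(U * diagonal (fun i => (d i : 𝕜)) * star U *
        (V * diagonal (fun j => (e j : 𝕜)) * star V)).trace‖ ≤ C * ∑ j, |e j| := by
  set W := star V * U
  have hW : W ∈ unitaryGroup n 𝕜 := mul_mem (Unitary.star_mem hV) hU
  have htrace : (U * diagonal (fun i => (d i : 𝕜)) * star U *
        (V * diagonal (fun j => (e j : 𝕜)) * star V)).trace
      = ∑ j, (W * diagonal (fun i => (d i : 𝕜)) * star W) j j * e j := by
    have hconj : W * diagonal (fun i => (d i : 𝕜)) * star W
        = star V * (U * diagonal (fun i => (d i : 𝕜)) * star U) * V := by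
      simp only [W, star_mul, star_star, Matrix.mul_assoc]
    rw [hconj, ← trace_mul_diagonal, trace_mul_comm, Matrix.mul_assoc, trace_mul_comm]
    simp only [Matrix.mul_assoc]
  rw [htrace, Finset.mul_sum]
  refine (norm_sum_le _ _).trans (Finset.sum_le_sum fun j _ => ?_)
  rw [norm_mul, RCLike.norm_ofReal]
  exact mul_le_mul_of_nonneg_right (norm_conj_diagonal_apply_self_le hW hd j) (abs_nonneg _)

lemma IsHermitian.norm_trace_cfc_mul_cfc_le {A B : Matrix n n 𝕜} (hA : A.IsHermitian)
    (hB : B.IsHermitian) {f : ℝ → ℝ} {C : ℝ} (hf : ∀ i, |f (hA.eigenvalues i)| ≤ C)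
    (g : ℝ → ℝ) :
    ‖(cfc f A * cfc g B).trace‖ ≤ C * ∑ j, |g (hB.eigenvalues j)| := by
  rw [hA.cfc_eq, hB.cfc_eq, IsHermitian.cfc, IsHermitian.cfc, Unitary.conjStarAlgAut_apply,
    Unitary.conjStarAlgAut_apply]
  exact norm_trace_conj_diagonal_mul_conj_diagonal_le hA.eigenvectorUnitary.2
    hB.eigenvectorUnitary.2 hf _

lemma IsHermitian.sum_eigenvalues_eq {A : Matrix n n 𝕜} (hA : A.IsHermitian) {t : ℝ}
    (h : A.trace = t) : ∑ i, hA.eigenvalues i = t := by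
  rw [hA.trace_eq_sum_eigenvalues] at h
  exact_mod_cast h

lemma PosSemidef.eigenvalues_le {A : Matrix n n 𝕜} (hA : A.PosSemidef) {t : ℝ}
    (h : A.trace = t) (i : n) : hA.1.eigenvalues i ≤ t :=
  hA.1.sum_eigenvalues_eq h ▸
    Finset.single_le_sum (fun j _ => hA.eigenvalues_nonneg j) (Finset.mem_univ i)

lemma IsHermitian.matPow_eq_cfc {A : Matrix n n ℂ} (hA : A.IsHermitian) (β : ℝ) :
    matPow A β = cfc (fun x : ℝ => if x = 0 then 0 else x ^ β) A := by
  rw [matPow, dif_pos hA, hA.cfc_eq]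

lemma IsHermitian.smul_mul_aeval_sub_smul_matPow {A : Matrix n n ℂ} (hA : A.IsHermitian)
    (a c β : ℝ) (p : ℝ[X]) :
    a • A * aeval A p - (c : ℂ) • matPow A β
      = cfc (fun x : ℝ => a * x * p.eval x - c * (if x = 0 then 0 else x ^ β)) A := by
  have hfin := A.finite_real_spectrum
  rw [hA.matPow_eq_cfc, cfc_sub _ _ A (hfin.continuousOn _) (hfin.continuousOn _),
    cfc_const_mul _ _ A (hfin.continuousOn _),
    cfc_mul _ _ A (hfin.continuousOn _) (hfin.continuousOn _),
    cfc_const_mul _ _ A (hfin.continuousOn _), cfc_id' ℝ A,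
    ← cfc_polynomial p A hA.isSelfAdjoint, Complex.coe_smul]

end Matrix

theorem abs_trace_poly_half_approx_le_general {r : ℕ}
    (α ε₁ δ₁ ε₂ : ℝ) (hα : α ∈ Set.Ioo (0 : ℝ) 1)
    (hε₁ : ε₁ ∈ Set.Ioo (0 : ℝ) 1) (hδ₁ : δ₁ ∈ Set.Ioo (0 : ℝ) 1)
    (ρ σ : Matrix (Fin r) (Fin r) ℂ)
    (hρ : ρ.PosSemidef) (hρ1 : ρ.trace = 1)
    (hσ : σ.PosSemidef) (hσ1 : σ.trace = 1)
    (p₁ p₂ : Polynomial ℝ)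
    (hp₁bdd : ∀ x ∈ Set.Icc (-1 : ℝ) 1, |p₁.eval x| ≤ 1)
    (hp₁approx : ∀ x ∈ Set.Icc δ₁ 1, |p₁.eval x - δ₁ ^ (1 - α) / 2 * x ^ (α - 1)| ≤ ε₁)
    (hp₂approx : ∀ x ∈ Set.Icc (0 : ℝ) 1, |p₂.eval x - (1 / 2) * x ^ (1 - α)| ≤ ε₂) :
    norm
        ((ρ * Polynomial.aeval ((1 / 2 : ℝ) • ρ) p₁
            * Polynomial.aeval ((1 / 2 : ℝ) • σ) p₂).trace
          - ((δ₁ ^ (1 - α) : ℝ) : ℂ)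
            * (matPow ((1 / 2 : ℝ) • ρ) α * Polynomial.aeval ((1 / 2 : ℝ) • σ) p₂).trace)
      ≤ ((r : ℝ) * ε₂ + 2 ^ (α - 2) * (r : ℝ) ^ α) * (4 * δ₁ + ε₁) := by
  set A := (1 / 2 : ℝ) • ρ
  set B := (1 / 2 : ℝ) • σ
  have hA : A.PosSemidef := hρ.smul (by norm_num)
  have hB : B.PosSemidef := hσ.smul (by norm_num)
  have hρA : ρ = (2 : ℝ) • A := by simp only [A, smul_smul]; norm_num
  have htrace : (ρ * aeval A p₁ * aeval B p₂).trace
        - ((δ₁ ^ (1 - α) : ℝ) : ℂ) * (matPow A α * aeval B p₂).trace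
      = (cfc (fun x => 2 * x * p₁.eval x - δ₁ ^ (1 - α) * (if x = 0 then 0 else x ^ α)) A
          * cfc p₂.eval B).trace := by
    rw [← hA.1.smul_mul_aeval_sub_smul_matPow, ← cfc_polynomial p₂ B hB.1.isSelfAdjoint, hρA,
      sub_mul, trace_sub, smul_mul_assoc ((δ₁ ^ (1 - α) : ℝ) : ℂ), trace_smul, smul_eq_mul]
  have hsum := sum_abs_le_of_abs_sub_half_rpow_le hα hp₂approx hB.eigenvalues_nonneg
    (hB.1.sum_eigenvalues_eq (trace_real_smul_of_trace_eq_one hσ1 _))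
  rw [Fintype.card_fin] at hsum
  rw [htrace, mul_comm _ (4 * δ₁ + ε₁)]
  calc _ ≤ (4 * δ₁ + ε₁) * ∑ j, |p₂.eval (hB.1.eigenvalues j)| :=
        hA.1.norm_trace_cfc_mul_cfc_le hB.1 (fun i => abs_two_mul_mul_sub_rpow_le hα.1.le hδ₁.1
          hε₁.1.le hp₁bdd hp₁approx (hA.eigenvalues_nonneg i)
          (hA.eigenvalues_le (trace_real_smul_of_trace_eq_one hρ1 _) i)) _
    _ ≤ (4 * δ₁ + ε₁) * (r * ε₂ + 2 ^ (α - 2) * r ^ α) := by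
        gcongr
        linarith [hδ₁.1, hε₁.1]

/-- `|tr(ρ p₁(ρ/2) p₂(σ/2)) - δ₁^{1-α} tr((ρ/2)^α p₂(σ/2))|
      ≤ (r ε₂ + 2^{α-2} r^α)(4δ₁ + ε₁)`. -/
theorem abs_trace_poly_half_approx_le {r : ℕ} (hr : 0 < r)
    (α ε₁ δ₁ ε₂ : ℝ) (hα : α ∈ Set.Ioo (0 : ℝ) 1)
    (hε₁ : ε₁ ∈ Set.Ioo (0 : ℝ) 1) (hδ₁ : δ₁ ∈ Set.Ioo (0 : ℝ) 1)
    (hε₂ : ε₂ ∈ Set.Ioo (0 : ℝ) 1)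
    (ρ σ : Matrix (Fin r) (Fin r) ℂ)
    (hρ : ρ.PosSemidef) (hρ1 : ρ.trace = 1)
    (hσ : σ.PosSemidef) (hσ1 : σ.trace = 1)
    (p₁ p₂ : Polynomial ℝ)
    (hp₁bdd : ∀ x ∈ Set.Icc (-1 : ℝ) 1, |p₁.eval x| ≤ 1)
    (hp₁approx : ∀ x ∈ Set.Icc δ₁ 1, |p₁.eval x - δ₁ ^ (1 - α) / 2 * x ^ (α - 1)| ≤ ε₁)
    (hp₂bdd : ∀ x ∈ Set.Icc (-1 : ℝ) 1, |p₂.eval x| ≤ 1)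
    (hp₂approx : ∀ x ∈ Set.Icc (0 : ℝ) 1, |p₂.eval x - (1 / 2) * x ^ (1 - α)| ≤ ε₂) :
    norm
        ((ρ * Polynomial.aeval ((1 / 2 : ℝ) • ρ) p₁
            * Polynomial.aeval ((1 / 2 : ℝ) • σ) p₂).trace
          - ((δ₁ ^ (1 - α) : ℝ) : ℂ)
            * (matPow ((1 / 2 : ℝ) • ρ) α * Polynomial.aeval ((1 / 2 : ℝ) • σ) p₂).trace)
      ≤ ((r : ℝ) * ε₂ + 2 ^ (α - 2) * (r : ℝ) ^ α) * (4 * δ₁ + ε₁) :=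
  abs_trace_poly_half_approx_le_general α ε₁ δ₁ ε₂ hα hε₁ hδ₁ ρ σ hρ hρ1 hσ hσ1 p₁ p₂ hp₁bdd
    hp₁approx hp₂approx
end
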